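/- arXiv:math/0204300 — 2 statements merged into one kernel-verified Lean document; each statement's English description precedes it below -/
import Mathlib

section
/- Fix n ≥ 2 and Schur parameters a_1, …, a_{n−1} with |a_j| ≠ 1 for 1 ≤ j ≤ n−1, and for t ∈ ℂ let φ_n^t(z) := z·φ_{n−1}(z) + t·φ*_{n−1}(z). Let U ⊆ ℂ be open and let λ : U → ℂ be holomorphic with φ_n^{t}(λ(t)) = 0 for all t ∈ U. Then for every t ∈ U: if λ(t) ≠ 0, then K_{n−1}(λ(t), conj(λ(t))^{−1}) · λ'(t) = −e_{n−1} · λ(t)^{1−n} · (φ̂*_{n−1}(λ(t)))²; and if λ(t) = 0, then a_{n−1} · λ'(t) = −1. -/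
open LaurentPolynomial Polynomial Complex ComplexConjugate

noncomputable section

/-- Reversed polynomial with conjugated coefficients: p*(z) = Σ conj(c_{m-k}) z^k. -/
def revc (p : Polynomial ℂ) : Polynomial ℂ := (p.map (starRingEnd ℂ)).reverse

/-- Monic orthogonal polynomials from Schur parameters: φ_0 = 1,
φ_n = z φ_{n-1} + a_n φ*_{n-1}. -/
def phi (a : ℕ → ℂ) : ℕ → Polynomial ℂ
  | 0 => 1
  | n + 1 => X * phi a n + Polynomial.C (a (n + 1)) * revc (phi a n)

/-- ρ_n := |1 - |a_n|²|^{1/2}. -/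
def rho (a : ℕ → ℂ) (n : ℕ) : ℝ := Real.sqrt |1 - ‖a n‖ ^ 2|

/-- ε_n := sgn (1 - |a_n|²). -/
def sgn (a : ℕ → ℂ) (n : ℕ) : ℝ := Real.sign (1 - ‖a n‖ ^ 2)

/-- ρ̂_n := ε_n ρ_n. -/
def rhoh (a : ℕ → ℂ) (n : ℕ) : ℝ := sgn a n * rho a n

/-- κ_n := Π_{k=1}^n ρ_k⁻¹ (κ_0 = 1). -/
def kap (a : ℕ → ℂ) (n : ℕ) : ℝ := ∏ k ∈ Finset.Icc 1 n, (rho a k)⁻¹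

/-- e_n := Π_{k=1}^n ε_k (e_0 = 1). -/
def esgn (a : ℕ → ℂ) (n : ℕ) : ℝ := ∏ k ∈ Finset.Icc 1 n, sgn a k

/-- Orthonormal polynomials φ̂_n := κ_n φ_n. -/
def phin (a : ℕ → ℂ) (n : ℕ) : Polynomial ℂ := Polynomial.C ((kap a n : ℝ) : ℂ) * phi a n

/-- Standard right orthonormal Laurent polynomials:
χ_{2m} = z^{-m} φ̂*_{2m}, χ_{2m+1} = z^{-m} φ̂_{2m+1}. -/
def chi (a : ℕ → ℂ) (n : ℕ) : LaurentPolynomial ℂ :=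
  T (-((n / 2 : ℕ) : ℤ)) * (if Even n then revc (phin a n) else phin a n).toLaurent

/-- The kernel K_n(z,y) := Σ_{k=0}^n e_k φ̂_k(z) conj(φ̂_k(y)). -/
def Kker (a : ℕ → ℂ) (n : ℕ) (z y : ℂ) : ℂ :=
  ∑ k ∈ Finset.range (n + 1),
    ((esgn a k : ℝ) : ℂ) * (phin a k).eval z * conj ((phin a k).eval y)

/-- Entries of the five-diagonal matrix, with rows/columns indexed from 1. -/
def Fent (a : ℕ → ℂ) (i j : ℕ) : ℂ :=
  if i = 1 then
    if j = 1 then -a 1 else if j = 2 then (rho a 1 : ℂ) else 0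
  else if i % 2 = 0 then
    if j + 1 = i then -(rhoh a (i - 1) : ℂ) * a i
    else if j = i then -conj (a (i - 1)) * a i
    else if j = i + 1 then -(rho a i : ℂ) * a (i + 1)
    else if j = i + 2 then (rho a i : ℂ) * (rho a (i + 1) : ℂ)
    else 0
  else
    if j + 2 = i then (rhoh a (i - 2) : ℂ) * (rhoh a (i - 1) : ℂ)
    else if j + 1 = i then conj (a (i - 2)) * (rhoh a (i - 1) : ℂ)
    else if j = i then -conj (a (i - 1)) * a i
    else if j = i + 1 then conj (a (i - 1)) * (rho a i : ℂ)
    else 0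

/-- The n×n five-diagonal matrix ℱ_n. -/
def Fmat (a : ℕ → ℂ) (n : ℕ) : Matrix (Fin n) (Fin n) ℂ :=
  Matrix.of fun i j => Fent a (i.val + 1) (j.val + 1)

/-- Evaluation of a Laurent polynomial at a nonzero complex number. -/
def levalAt (z : ℂ) (f : LaurentPolynomial ℂ) : ℂ :=
  Finsupp.sum f.coeff fun k c => c * z ^ k

/-!
Implicit differentiation of `λ φ(λ) + t φ*(λ) = 0` (with `φ = φ_{n-1}`) gives
`(φ(λ) + λ φ'(λ) + t φ*'(λ)) λ' = -φ*(λ)`. Multiplying by `φ*(λ)` and eliminating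
`t φ*(λ) = -λ φ(λ)` turns the left factor into the confluent Christoffel–Darboux expression
`φφ* + z W(φ*, φ)` at `λ`, where `W(f, g) = f g' - f' g`. By the Szegő recursion
`W(φ*_{k+1}, φ_{k+1})` is `1 - |a_{k+1}|²` times that expression at level `k`, and
`e_{k+1} κ_{k+1}² (1 - |a_{k+1}|²) = e_k κ_k²`; induction then gives
`z^m K_m(z, z̄⁻¹) = e_m κ_m² (φ_m φ_m* + z W(φ_m*, φ_m))(z)`. At `λ = 0` the root equation forces
`t = 0`, and the derivative identity reads `φ_{n-1}(0) λ' = -1` with `φ_{n-1}(0) = a_{n-1}`.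
-/
lemma natDegree_revc_le (p : ℂ[X]) : (revc p).natDegree ≤ p.natDegree :=
  (reverse_natDegree_le _).trans natDegree_map_le

lemma eval_map_conj (p : ℂ[X]) (w : ℂ) :
    (p.map (starRingEnd ℂ)).eval w = conj (p.eval (conj w)) := by
  simp [eval_map, ← Polynomial.eval₂_hom]

lemma eval_revc {z : ℂ} (hz : z ≠ 0) (p : ℂ[X]) :
    (revc p).eval z = z ^ p.natDegree * conj (p.eval (conj z)⁻¹) := by
  have : Invertible z⁻¹ := invertibleOfNonzero (inv_ne_zero hz)
  have h := eval₂_reverse_mul_pow (RingHom.id ℂ) z⁻¹ (p.map (starRingEnd ℂ))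
  rw [invOf_eq_inv, inv_inv, natDegree_map_eq_of_injective (starRingEnd ℂ).injective,
    eval₂_id, eval₂_id, eval_map_conj, map_inv₀] at h
  rw [revc, ← h, inv_pow, mul_left_comm, mul_inv_cancel₀ (pow_ne_zero _ hz), mul_one]

lemma revc_one : revc 1 = 1 := by
  rw [revc, Polynomial.map_one, ← C_1, reverse_C]

lemma revc_C_mul (r : ℂ) (p : ℂ[X]) :
    revc (Polynomial.C r * p) = Polynomial.C (conj r) * revc p := by
  simp [revc, Polynomial.map_mul, reverse_mul_of_domain]

lemma eval_zero_revc {p : ℂ[X]} (hp : p.Monic) : (revc p).eval 0 = 1 := by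
  rw [← coeff_zero_eq_eval_zero, revc, coeff_zero_reverse, (hp.map _).leadingCoeff]

lemma degree_C_mul_revc_lt {p : ℂ[X]} (hp : p ≠ 0) (c : ℂ) :
    (Polynomial.C c * revc p).degree < (X * p).degree := by
  rw [mul_comm X, degree_mul_X, degree_eq_natDegree hp]
  calc (Polynomial.C c * revc p).degree ≤ (Polynomial.C c * revc p).natDegree := degree_le_natDegree
    _ ≤ p.natDegree := by exact_mod_cast (natDegree_C_mul_le _ _).trans (natDegree_revc_le p)
    _ < p.natDegree + 1 := by exact_mod_cast Nat.lt_succ_self _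

lemma natDegree_X_mul_add_C_mul_revc {p : ℂ[X]} (hp : p ≠ 0) (c : ℂ) :
    (X * p + Polynomial.C c * revc p).natDegree = p.natDegree + 1 := by
  rw [natDegree_add_eq_left_of_degree_lt (degree_C_mul_revc_lt hp c), natDegree_X_mul hp]

lemma Polynomial.Monic.X_mul_add_C_mul_revc {p : ℂ[X]} (hp : p.Monic) (c : ℂ) :
    (X * p + Polynomial.C c * revc p).Monic :=
  (monic_X.mul hp).add_of_left (degree_C_mul_revc_lt hp.ne_zero c)

lemma revc_X_mul_add_C_mul_revc (p : ℂ[X]) (c : ℂ) :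
    revc (X * p + Polynomial.C c * revc p) = revc p + Polynomial.C (conj c) * (X * p) := by
  rcases eq_or_ne p 0 with rfl | hp
  · simp [revc]
  have hrevc (q : ℂ[X]) : revc q = reflect q.natDegree (q.map (starRingEnd ℂ)) := by
    rw [revc, reverse, natDegree_map_eq_of_injective (starRingEnd ℂ).injective]
  set N := p.natDegree
  have hreflect_X_mul (f : ℂ[X]) (hf : f.natDegree ≤ N) :
      reflect (N + 1) (X * f) = reflect N f := by
    rw [add_comm, reflect_mul _ _ natDegree_X_le hf, reflect_one_X, one_mul]
  have hreflect_succ (f : ℂ[X]) (hf : f.natDegree ≤ N) :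
      reflect (N + 1) f = X * reflect N f := by
    conv_lhs => rw [add_comm, ← one_mul f]
    rw [reflect_mul _ _ (by simp) hf, reflect_one, pow_one]
  have hreflect_revc : reflect N ((revc p).map (starRingEnd ℂ)) = p := by
    rw [hrevc p, reflect_map, reflect_reflect, Polynomial.map_map]
    ext; simp
  rw [hrevc, natDegree_X_mul_add_C_mul_revc hp, Polynomial.map_add, Polynomial.map_mul,
    Polynomial.map_mul, map_X, map_C, reflect_add, hreflect_X_mul _ natDegree_map_le, reflect_C_mul,
    hreflect_succ _ (natDegree_map_le.trans (natDegree_revc_le p)), hreflect_revc, ← hrevc p]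

lemma wronskian_X_mul_add_C_mul {R : Type*} [CommRing R] (P Q : R[X]) (c d : R) :
    wronskian (Q + Polynomial.C d * (X * P)) (X * P + Polynomial.C c * Q) =
      Polynomial.C (1 - c * d) * (P * Q + X * wronskian Q P) := by
  simp only [wronskian, derivative_add, derivative_mul, derivative_X, derivative_C, map_sub,
    map_one, map_mul]
  ring

lemma eval_derivative_mul_deriv_of_eval_eq_zero {P Q : ℂ[X]} {U : Set ℂ} (hU : IsOpen U)
    {lam : ℂ → ℂ} (hlam : DifferentiableOn ℂ lam U)
    (hroot : ∀ s ∈ U, (X * P + Polynomial.C s * Q).eval (lam s) = 0) {t : ℂ} (ht : t ∈ U) :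
    (P.eval (lam t) + lam t * (derivative P).eval (lam t) + t * (derivative Q).eval (lam t)) *
      deriv lam t = -Q.eval (lam t) := by
  have hL : HasDerivAt lam (deriv lam t) t :=
    ((hlam t ht).differentiableAt (hU.mem_nhds ht)).hasDerivAt
  have hF : HasDerivAt (fun s => lam s * P.eval (lam s) + s * Q.eval (lam s))
      (deriv lam t * P.eval (lam t) + lam t * (P.derivative.eval (lam t) * deriv lam t)
        + (1 * Q.eval (lam t) + t * (Q.derivative.eval (lam t) * deriv lam t))) t :=
    (hL.mul ((P.hasDerivAt _).comp t hL)).add ((hasDerivAt_id t).mul ((Q.hasDerivAt _).comp t hL))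
  have hF0 : (fun s => lam s * P.eval (lam s) + s * Q.eval (lam s)) =ᶠ[nhds t] fun _ => 0 := by
    filter_upwards [hU.mem_nhds ht] with s hs
    simpa using hroot s hs
  have := (hF.congr_of_eventuallyEq hF0.symm).unique (hasDerivAt_const t 0)
  linear_combination this

section Schur

variable (a : ℕ → ℂ)

lemma phi_monic (k : ℕ) : (phi a k).Monic := by
  induction k with
  | zero => exact monic_one
  | succ k ih => exact ih.X_mul_add_C_mul_revc _

lemma phi_natDegree (k : ℕ) : (phi a k).natDegree = k := by
  induction k with
  | zero => exact natDegree_one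
  | succ k ih => rw [phi, natDegree_X_mul_add_C_mul_revc (phi_monic a k).ne_zero, ih]

lemma eval_zero_phi_succ (k : ℕ) : (phi a (k + 1)).eval 0 = a (k + 1) := by
  simp [phi, eval_zero_revc (phi_monic a k)]

lemma revc_phin (k : ℕ) : revc (phin a k) = Polynomial.C ((kap a k : ℝ) : ℂ) * revc (phi a k) := by
  rw [phin, revc_C_mul, conj_ofReal]

lemma sgn_mul_one_sub_norm_sq (k : ℕ) : sgn a k * (1 - ‖a k‖ ^ 2) = rho a k ^ 2 := by
  rw [sgn, rho, Real.sq_sqrt (abs_nonneg _)]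
  rcases lt_trichotomy (1 - ‖a k‖ ^ 2) 0 with h | h | h
  · rw [Real.sign_of_neg h, abs_of_neg h]; ring
  · rw [h]; simp
  · rw [Real.sign_of_pos h, abs_of_pos h, one_mul]

variable {a} in
lemma rho_ne_zero {k : ℕ} (h : ‖a k‖ ≠ 1) : rho a k ≠ 0 := by
  rw [rho, Real.sqrt_ne_zero', abs_pos, sub_ne_zero, ne_comm]
  exact fun h2 => h ((pow_eq_one_iff_of_nonneg (norm_nonneg _) two_ne_zero).1 h2)

variable {a} in
lemma esgn_mul_kap_sq_succ {k : ℕ} (h : ‖a (k + 1)‖ ≠ 1) :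
    esgn a (k + 1) * kap a (k + 1) ^ 2 * (1 - ‖a (k + 1)‖ ^ 2) = esgn a k * kap a k ^ 2 := by
  have hρ := rho_ne_zero h
  rw [esgn, kap, Finset.prod_Icc_succ_top (by omega), Finset.prod_Icc_succ_top (by omega),
    ← esgn, ← kap]
  calc esgn a k * sgn a (k + 1) * (kap a k * (rho a (k + 1))⁻¹) ^ 2 * (1 - ‖a (k + 1)‖ ^ 2)
      = esgn a k * kap a k ^ 2 * ((sgn a (k + 1) * (1 - ‖a (k + 1)‖ ^ 2)) / rho a (k + 1) ^ 2) := by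
        field_simp
    _ = esgn a k * kap a k ^ 2 := by
        rw [sgn_mul_one_sub_norm_sq, div_self (pow_ne_zero _ hρ), mul_one]

def confluentCD (m : ℕ) : ℂ[X] :=
  phi a m * revc (phi a m) + X * wronskian (revc (phi a m)) (phi a m)

lemma wronskian_revc_phi_succ (k : ℕ) :
    wronskian (revc (phi a (k + 1))) (phi a (k + 1)) =
      Polynomial.C ((1 - ‖a (k + 1)‖ ^ 2 : ℝ) : ℂ) * confluentCD a k := by
  rw [phi, revc_X_mul_add_C_mul_revc, wronskian_X_mul_add_C_mul, mul_conj']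
  push_cast
  rfl

lemma phin_eval_mul_conj_eval_inv_conj {z : ℂ} (hz : z ≠ 0) (k : ℕ) :
    (phin a k).eval z * conj ((phin a k).eval (conj z)⁻¹) =
      ((kap a k : ℝ) : ℂ) ^ 2 * (z ^ k)⁻¹ * ((phi a k).eval z * (revc (phi a k)).eval z) := by
  rw [eval_revc hz, phi_natDegree]
  simp only [phin, eval_mul, eval_C, map_mul, conj_ofReal]
  field_simp

variable {a} in
theorem Kker_inv_conj {m : ℕ} (ha : ∀ j, 1 ≤ j → j ≤ m → ‖a j‖ ≠ 1) {z : ℂ} (hz : z ≠ 0) :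
    Kker a m z (conj z)⁻¹ =
      (z ^ m)⁻¹ * (((esgn a m * kap a m ^ 2 : ℝ) : ℂ) * (confluentCD a m).eval z) := by
  induction m with
  | zero => simp [Kker, esgn, kap, phin, phi, confluentCD, revc_one, wronskian_self_eq_zero]
  | succ k ih =>
    have hc := congrArg ((↑) : ℝ → ℂ) (esgn_mul_kap_sq_succ (ha (k + 1) le_add_self le_rfl))
    push_cast at hc
    rw [Kker, Finset.sum_range_succ, ← Kker, confluentCD, eval_add, eval_mul, eval_mul, eval_X,
      wronskian_revc_phi_succ, eval_mul, eval_C, ih fun j hj hjk => ha j hj (by omega), mul_assoc,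
      phin_eval_mul_conj_eval_inv_conj a hz]
    field_simp
    push_cast
    linear_combination -z ^ (k + 1) * (confluentCD a k).eval z * hc

end Schur

/-- Theorem 4.3: for the extensions φ_n^t(z) = z φ_{n−1}(z) + t φ*_{n−1}(z)
of a fixed finite segment, any holomorphic branch λ(t) of zeros satisfies
K_{n−1}(λ(t), conj(λ(t))⁻¹) λ'(t) = −e_{n−1} λ(t)^{1−n} (φ̂*_{n−1}(λ(t)))² when λ(t) ≠ 0,
and a_{n−1} λ'(t) = −1 when λ(t) = 0. -/
theorem extension_zero_derivative
    (n : ℕ) (hn : 2 ≤ n) (a : ℕ → ℂ)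
    (ha : ∀ j, 1 ≤ j → j ≤ n - 1 → ‖a j‖ ≠ 1)
    (U : Set ℂ) (hU : IsOpen U) (lam : ℂ → ℂ) (hlam : DifferentiableOn ℂ lam U)
    (hroot : ∀ t ∈ U, (X * phi a (n - 1) + Polynomial.C t * revc (phi a (n - 1))).eval (lam t) = 0) :
    ∀ t ∈ U,
      (lam t ≠ 0 →
        Kker a (n - 1) (lam t) ((conj (lam t))⁻¹) * deriv lam t =
          -((esgn a (n - 1) : ℝ) : ℂ) * lam t ^ ((1 : ℤ) - n) *
            ((revc (phin a (n - 1))).eval (lam t)) ^ 2) ∧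
      (lam t = 0 → a (n - 1) * deriv lam t = -1) := by
  obtain ⟨m, rfl⟩ : ∃ m, n = m + 1 := ⟨n - 1, by omega⟩
  simp only [Nat.add_sub_cancel] at ha hroot ⊢
  intro t ht
  have hD := eval_derivative_mul_deriv_of_eval_eq_zero hU hlam hroot ht
  have hrt := hroot t ht
  simp only [eval_add, eval_mul, eval_X, eval_C] at hrt
  refine ⟨fun hz => ?_, fun hz => ?_⟩
  · have hCD :
        (confluentCD a m).eval (lam t) * deriv lam t = -(revc (phi a m)).eval (lam t) ^ 2 := by
      simp only [confluentCD, wronskian, eval_add, eval_mul, eval_sub, eval_X]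
      linear_combination (revc (phi a m)).eval (lam t) * hD
        - (derivative (revc (phi a m))).eval (lam t) * deriv lam t * hrt
    have hpow : lam t ^ ((1 : ℤ) - ↑(m + 1)) = (lam t ^ m)⁻¹ := by
      rw [Nat.cast_succ, add_comm, sub_add_cancel_left, zpow_neg, zpow_natCast]
    rw [Kker_inv_conj ha hz, revc_phin, eval_mul, eval_C, hpow]
    push_cast
    linear_combination (lam t ^ m)⁻¹ * (esgn a m : ℂ) * (kap a m : ℂ) ^ 2 * hCD
  · obtain ⟨k, rfl⟩ : ∃ k, m = k + 1 := ⟨m - 1, by omega⟩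
    rw [hz, eval_zero_revc (phi_monic a _), mul_one, zero_mul, zero_add] at hrt
    rw [hz, hrt, eval_zero_phi_succ, eval_zero_revc (phi_monic a _)] at hD
    rw [hrt]
    linear_combination hD
end
end

section
/- Fix n ≥ 1 and Schur parameters a_1, …, a_n with |a_j| ≠ 1. For t ∈ ℝ set a_j(t) := e^{it} a_j for all j; let φ_j^t be the monic polynomials generated by the recurrence with parameters a_j(t), and φ̂_j^t := κ_j φ_j^t (the quantities ρ_j, ε_j, κ_j, e_j are unchanged by the perturbation since |a_j(t)| = |a_j|), and K_{n−1}^t(z,y) := Σ_{j=0}^{n−1} e_j φ̂_j^t(z) conj(φ̂_j^t(y)). Let I ⊆ ℝ be an open interval and λ : I → ℂ differentiable with φ_n^t(λ(t)) = 0 and λ(t) ≠ 0 for all t ∈ I. Then for all t ∈ I: K_{n−1}^t(λ(t), conj(λ(t))^{−1}) · λ'(t) = i · λ(t); in particular, if K_{n−1}^t(λ(t), conj(λ(t))^{−1}) ≠ 0 then λ'(t) = i λ(t) / K_{n−1}^t(λ(t), conj(λ(t))^{−1}). -/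
open LaurentPolynomial Polynomial Complex ComplexConjugate

noncomputable section

/-- Orthonormal polynomials for the perturbed parameters `b`, with the normalization
constants κ_j taken from the unperturbed parameters `a` (they are unchanged by a
rotation of the parameters). -/
def phinPert (a b : ℕ → ℂ) (j : ℕ) : Polynomial ℂ :=
  Polynomial.C ((kap a j : ℝ) : ℂ) * phi b j

/-- The perturbed kernel K_m(z,y) = Σ_{j=0}^m e_j φ̂_j^t(z) conj(φ̂_j^t(y)), with e_j taken
from the unperturbed parameters. -/
def KkerPert (a b : ℕ → ℂ) (m : ℕ) (z y : ℂ) : ℂ :=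
  ∑ j ∈ Finset.range (m + 1),
    ((esgn a j : ℝ) : ℂ) * (phinPert a b j).eval z * conj ((phinPert a b j).eval y)

/-- Simultaneous rotation of all Schur parameters: a_j ↦ e^{it} a_j. -/
def aRotAll (a : ℕ → ℂ) (t : ℝ) : ℕ → ℂ :=
  fun j => Complex.exp (Complex.I * t) * a j

lemma revc_eq_reflect {p : ℂ[X]} {n : ℕ} (hp : p.natDegree = n) :
    revc p = reflect n (p.map (starRingEnd ℂ)) := by
  rw [revc, reverse, natDegree_map_eq_of_injective (RingHom.injective _), hp]

lemma map_conj_map_conj (p : ℂ[X]) : (p.map (starRingEnd ℂ)).map (starRingEnd ℂ) = p := by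
  simp [map_map, RingHomCompTriple.comp_eq]

section Recursion

variable (b : ℕ → ℂ)

lemma phi_succ (n : ℕ) :
    phi b (n + 1) = X * phi b n + Polynomial.C (b (n + 1)) * revc (phi b n) := rfl

lemma monic_phi_and_natDegree_phi (n : ℕ) : (phi b n).Monic ∧ (phi b n).natDegree = n := by
  induction n with
  | zero => exact ⟨monic_one, natDegree_one⟩
  | succ n ih =>
    obtain ⟨hmonic, hdeg⟩ := ih
    have hX : (X * phi b n).natDegree = n + 1 := by rw [natDegree_X_mul hmonic.ne_zero, hdeg]
    have hlt : (Polynomial.C (b (n + 1)) * revc (phi b n)).degree < (X * phi b n).degree := by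
      rw [degree_eq_natDegree (monic_X.mul hmonic).ne_zero, hX]
      refine (degree_le_natDegree.trans ?_).trans_lt (WithBot.coe_lt_coe.2 n.lt_succ_self)
      exact WithBot.coe_le_coe.2
        ((natDegree_C_mul_le _ _).trans ((natDegree_revc_le _).trans hdeg.le))
    exact ⟨(monic_X.mul hmonic).add_of_left hlt, by
      rw [phi_succ, natDegree_add_eq_left_of_degree_lt hlt, hX]⟩

lemma natDegree_phi (n : ℕ) : (phi b n).natDegree = n := (monic_phi_and_natDegree_phi b n).2

lemma revc_phi_succ (n : ℕ) :
    revc (phi b (n + 1)) = revc (phi b n) + Polynomial.C (conj (b (n + 1))) * X * phi b n := by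
  have hdeg := natDegree_phi b n
  have hmap : (phi b (n + 1)).map (starRingEnd ℂ) =
      X * (phi b n).map (starRingEnd ℂ) +
        Polynomial.C (conj (b (n + 1))) * reflect n (phi b n) := by
    rw [phi_succ, Polynomial.map_add, Polynomial.map_mul, Polynomial.map_mul, map_X, map_C,
      revc_eq_reflect hdeg, ← reflect_map, map_conj_map_conj]
  have hX : reflect (1 + n) (X * (phi b n).map (starRingEnd ℂ)) = revc (phi b n) := by
    rw [reflect_mul _ _ natDegree_X_le ((natDegree_map_le).trans hdeg.le), reflect_one_X, one_mul,
      revc_eq_reflect hdeg]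
  have hR : reflect (1 + n) (1 * reflect n (phi b n)) = X * phi b n := by
    rw [reflect_mul (F := 1) _ _ (by simp) (natDegree_reflect_le.trans (by simp [hdeg])),
      reflect_one, pow_one, reflect_reflect]
  rw [revc_eq_reflect (natDegree_phi b (n + 1)), hmap, reflect_add, reflect_C_mul, add_comm n 1,
    hX, ← one_mul (reflect n (phi b n)), hR, mul_assoc]

lemma eval_phi_succ (n : ℕ) (z : ℂ) :
    (phi b (n + 1)).eval z = z * (phi b n).eval z + b (n + 1) * (revc (phi b n)).eval z := by
  simp [phi_succ]

lemma eval_revc_phi_succ (n : ℕ) (z : ℂ) :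
    (revc (phi b (n + 1))).eval z =
      (revc (phi b n)).eval z + conj (b (n + 1)) * z * (phi b n).eval z := by
  simp [revc_phi_succ]

lemma eval_revc_phi (n : ℕ) {z : ℂ} (hz : z ≠ 0) :
    (revc (phi b n)).eval z = z ^ n * conj ((phi b n).eval (conj z)⁻¹) := by
  induction n generalizing z with
  | zero => simp [phi, revc_one]
  | succ n ih =>
    have hw : (conj z)⁻¹ ≠ 0 := by simpa using hz
    have hconj : conj ((revc (phi b n)).eval (conj z)⁻¹) = (z ^ n)⁻¹ * (phi b n).eval z := by
      rw [ih hw]; simp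
    rw [eval_revc_phi_succ, eval_phi_succ, ih hz, map_add, map_mul, map_mul, hconj, map_inv₀,
      Complex.conj_conj]
    field_simp
    ring

end Recursion

section ChristoffelDarboux

variable (b : ℕ → ℂ)

def normDefect (n : ℕ) : ℝ := ∏ k ∈ Finset.Icc 1 n, (1 - ‖b k‖ ^ 2)

lemma normDefect_succ (n : ℕ) :
    normDefect b (n + 1) = normDefect b n * (1 - ‖b (n + 1)‖ ^ 2) :=
  Finset.prod_Icc_succ_top (by omega) _

lemma normDefect_ne_zero {n : ℕ} (hb : ∀ j, 1 ≤ j → j ≤ n → ‖b j‖ ≠ 1) :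
    normDefect b n ≠ 0 := by
  refine Finset.prod_ne_zero_iff.2 fun j hj => sub_ne_zero.2 fun h => ?_
  obtain ⟨h1, h2⟩ := Finset.mem_Icc.1 hj
  exact hb j h1 h2 (by nlinarith [norm_nonneg (b j)])

lemma sign_mul_inv_sqrt_abs_sq (x : ℝ) : Real.sign x * (√|x|)⁻¹ ^ 2 = x⁻¹ := by
  rw [inv_pow, Real.sq_sqrt (abs_nonneg x)]
  rcases lt_trichotomy x 0 with hx | rfl | hx
  · rw [Real.sign_of_neg hx, abs_of_neg hx, inv_neg]; ring
  · simp
  · rw [Real.sign_of_pos hx, abs_of_pos hx, one_mul]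

lemma esgn_mul_kap_sq (n : ℕ) : esgn b n * kap b n ^ 2 = (normDefect b n)⁻¹ := by
  simp only [esgn, kap, normDefect, sgn, rho, ← Finset.prod_pow, ← Finset.prod_mul_distrib,
    ← Finset.prod_inv_distrib, sign_mul_inv_sqrt_abs_sq]

lemma Kker_eq_sum (m : ℕ) (z y : ℂ) :
    Kker b m z y = ∑ k ∈ Finset.range (m + 1),
      ((normDefect b k : ℝ) : ℂ)⁻¹ * (phi b k).eval z * conj ((phi b k).eval y) := by
  refine Finset.sum_congr rfl fun k _ => ?_
  have hw := congrArg (fun r : ℝ => (r : ℂ)) (esgn_mul_kap_sq b k)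
  push_cast at hw
  simp only [phin, eval_mul, eval_C, map_mul, Complex.conj_ofReal, ← hw]
  ring

lemma christoffel_darboux {n : ℕ} (hD : ∀ k < n, normDefect b k ≠ 0) (z y : ℂ) :
    (normDefect b n : ℂ) * (1 - conj y * z) * ∑ k ∈ Finset.range n,
        ((normDefect b k : ℝ) : ℂ)⁻¹ * (phi b k).eval z * conj ((phi b k).eval y) =
      (revc (phi b n)).eval z * conj ((revc (phi b n)).eval y) -
        (phi b n).eval z * conj ((phi b n).eval y) := by
  induction n with
  | zero => simp [phi, revc_one]
  | succ n ih =>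
    have hDn : (normDefect b n : ℂ) * (normDefect b n : ℂ)⁻¹ = 1 :=
      mul_inv_cancel₀ (by exact_mod_cast hD n n.lt_succ_self)
    have hnorm : ((‖b (n + 1)‖ ^ 2 : ℝ) : ℂ) = b (n + 1) * conj (b (n + 1)) := by
      rw [Complex.mul_conj, Complex.sq_norm]
    rw [Finset.sum_range_succ, normDefect_succ, eval_revc_phi_succ, eval_phi_succ,
      eval_revc_phi_succ, eval_phi_succ]
    push_cast at hnorm ⊢
    simp only [hnorm, map_add, map_mul, Complex.conj_conj]
    linear_combination (1 - b (n + 1) * conj (b (n + 1))) * ih (fun k hk => hD k (by omega))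
      + (1 - b (n + 1) * conj (b (n + 1))) * (1 - conj y * z) * (phi b n).eval z
        * conj ((phi b n).eval y) * hDn

lemma normDefect_mul_Kker_of_root {m : ℕ} (hD : ∀ k ≤ m, normDefect b k ≠ 0) {w : ℂ}
    (hw : w ≠ 0) (hroot : (phi b (m + 1)).eval w = 0) :
    (normDefect b (m + 1) : ℂ) * Kker b m w (conj w)⁻¹ * w ^ (m + 1) =
      w * (revc (phi b (m + 1))).eval w * (derivative (phi b (m + 1))).eval w := by
  set y := (conj w)⁻¹
  set S : ℂ → ℂ := fun z => ∑ k ∈ Finset.range (m + 1),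
    ((normDefect b k : ℝ) : ℂ)⁻¹ * (phi b k).eval z * conj ((phi b k).eval y)
  have hconj_y : conj y = w⁻¹ := by simp [y]
  have hy : y ≠ 0 := by simpa [y] using hw
  have hRy : (revc (phi b (m + 1))).eval y = 0 := by
    rw [eval_revc_phi b _ hy, hconj_y, inv_inv, hroot, map_zero, mul_zero]
  have hRw : (revc (phi b (m + 1))).eval w = w ^ (m + 1) * conj ((phi b (m + 1)).eval y) :=
    eval_revc_phi b _ hw
  have hCD : (fun z => (normDefect b (m + 1) : ℂ) * (1 - conj y * z) * S z) =
      fun z => (revc (phi b (m + 1))).eval z * conj ((revc (phi b (m + 1))).eval y) -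
        (phi b (m + 1)).eval z * conj ((phi b (m + 1)).eval y) :=
    funext (christoffel_darboux b (fun k hk => hD k (by omega)) · y)
  have hS : DifferentiableAt ℂ S w := by fun_prop
  have hlhs : HasDerivAt (fun z => (normDefect b (m + 1) : ℂ) * (1 - conj y * z) * S z)
      ((normDefect b (m + 1) : ℂ) * -(conj y * 1) * S w +
        (normDefect b (m + 1) : ℂ) * (1 - conj y * w) * deriv S w) w :=
    ((hasDerivAt_id w).const_mul (conj y)).const_sub 1
      |>.const_mul (normDefect b (m + 1) : ℂ) |>.mul hS.hasDerivAt
  have hrhs := ((revc (phi b (m + 1))).hasDerivAt w)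
    |>.mul_const (conj ((revc (phi b (m + 1))).eval y))
    |>.sub (((phi b (m + 1)).hasDerivAt w).mul_const (conj ((phi b (m + 1)).eval y)))
  rw [hCD] at hlhs
  have hderiv := hlhs.unique hrhs
  rw [hRy, hconj_y] at hderiv
  rw [Kker_eq_sum, hRw]
  change _ * S w * _ = _
  simp only [map_zero, mul_zero, zero_sub, inv_mul_cancel₀ hw, sub_self, zero_mul, add_zero,
    mul_one] at hderiv
  linear_combination (-(w ^ (m + 1) * w)) * hderiv
    - (normDefect b (m + 1) : ℂ) * S w * w ^ (m + 1) * mul_inv_cancel₀ hw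

end ChristoffelDarboux

section ParameterDerivative

/-- The pair `(∂φ_n, ∂φ*_n)` of derivatives of `φ_n, φ*_n` at fixed `z` when the
parameters `b` move with velocity `β`. -/
def phiDeriv (b β : ℕ → ℂ) : ℕ → ℂ[X] × ℂ[X]
  | 0 => (0, 0)
  | n + 1 =>
    (X * (phiDeriv b β n).1 + Polynomial.C (β (n + 1)) * revc (phi b n) +
        Polynomial.C (b (n + 1)) * (phiDeriv b β n).2,
      (phiDeriv b β n).2 + Polynomial.C (conj (β (n + 1))) * X * phi b n +
        Polynomial.C (conj (b (n + 1))) * X * (phiDeriv b β n).1)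

lemma hasDerivAt_eval_phi {b : ℝ → ℕ → ℂ} {β : ℕ → ℂ} {z : ℝ → ℂ} {t : ℝ} {z' : ℂ}
    (hb : ∀ k, HasDerivAt (fun s => b s k) (β k) t) (hz : HasDerivAt z z' t) (n : ℕ) :
    HasDerivAt (fun s => (phi (b s) n).eval (z s))
        ((phiDeriv (b t) β n).1.eval (z t) + (derivative (phi (b t) n)).eval (z t) * z') t ∧
      HasDerivAt (fun s => (revc (phi (b s) n)).eval (z s))
        ((phiDeriv (b t) β n).2.eval (z t) +
          (derivative (revc (phi (b t) n))).eval (z t) * z') t := by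
  induction n with
  | zero => constructor <;> simpa [phi, phiDeriv, revc_one] using hasDerivAt_const t (1 : ℂ)
  | succ n ih =>
    obtain ⟨hphi, hrevc⟩ := ih
    simp only [eval_phi_succ, eval_revc_phi_succ]
    constructor
    · refine ((hz.mul hphi).add ((hb (n + 1)).mul hrevc)).congr_deriv ?_
      simp only [phiDeriv, phi_succ, derivative_add, derivative_mul, derivative_X,
        derivative_C, eval_add, eval_mul, eval_X, eval_C, zero_mul, one_mul, zero_add]
      ring
    · refine (hrevc.add (((hb (n + 1)).star.mul hz).mul hphi)).congr_deriv ?_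
      simp only [phiDeriv, revc_phi_succ, derivative_add, derivative_mul, derivative_X,
        derivative_C, eval_add, eval_mul, eval_X, eval_C, eval_one, zero_mul, zero_add,
        starRingEnd_apply, Pi.mul_apply]
      ring

lemma revc_mul_phiDeriv_rotation (b : ℕ → ℂ) (n : ℕ) :
    revc (phi b n) * (phiDeriv b (fun k => I * b k) n).1 -
        phi b n * (phiDeriv b (fun k => I * b k) n).2 -
        Polynomial.C I * phi b n * revc (phi b n) =
      Polynomial.C (-I * (normDefect b n : ℂ)) * X ^ n := by
  induction n with
  | zero => simp [phi, phiDeriv, revc_one, normDefect]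
  | succ n ih =>
    have hnorm : ((1 - ‖b (n + 1)‖ ^ 2 : ℝ) : ℂ) = 1 - b (n + 1) * conj (b (n + 1)) := by
      rw [Complex.mul_conj, Complex.sq_norm]; push_cast; rfl
    rw [revc_phi_succ, phiDeriv, phi_succ, normDefect_succ, Complex.ofReal_mul, hnorm, pow_succ]
    simp only [map_mul, map_sub, map_one, map_neg, Complex.conj_I] at ih ⊢
    linear_combination
      ((1 - Polynomial.C (b (n + 1)) * Polynomial.C (conj (b (n + 1)))) * X) * ih

lemma revc_mul_phiDeriv_rotation_of_root (b : ℕ → ℂ) {n : ℕ} {w : ℂ}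
    (hroot : (phi b n).eval w = 0) :
    (revc (phi b n)).eval w * (phiDeriv b (fun k => I * b k) n).1.eval w =
      -I * (normDefect b n : ℂ) * w ^ n := by
  simpa [hroot] using congrArg (eval w) (revc_mul_phiDeriv_rotation b n)

end ParameterDerivative

section Rotation

variable (a : ℕ → ℂ)

lemma norm_aRotAll (t : ℝ) (k : ℕ) : ‖aRotAll a t k‖ = ‖a k‖ := by
  simp [aRotAll, Complex.norm_exp]

lemma hasDerivAt_aRotAll (t : ℝ) (k : ℕ) :
    HasDerivAt (fun s => aRotAll a s k) (I * aRotAll a t k) t := by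
  have hexp := (((hasDerivAt_id t).ofReal_comp).const_mul I).cexp
  refine (hexp.mul_const (a k)).congr_deriv ?_
  simp [aRotAll]
  ring

lemma KkerPert_eq_Kker {b : ℕ → ℂ} (h : ∀ k, ‖b k‖ = ‖a k‖) : KkerPert a b = Kker b := by
  have hrho : rho a = rho b := funext fun k => by simp [rho, h]
  have hsgn : sgn a = sgn b := funext fun k => by simp [sgn, h]
  ext m z y
  simp [KkerPert, Kker, phinPert, phin, kap, esgn, hrho, hsgn]

end Rotation

/-- Theorem 4.6: under simultaneous rotation of all Schur parameters,
any differentiable branch of nonzero zeros satisfies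
K_{n−1}^t(λ(t), conj(λ(t))⁻¹) · λ'(t) = i λ(t). -/
theorem zero_variation_total_rotation
    (n : ℕ) (hn : 1 ≤ n)
    (a : ℕ → ℂ) (ha : ∀ j, 1 ≤ j → j ≤ n → ‖a j‖ ≠ 1)
    (α β : ℝ) (lam : ℝ → ℂ)
    (hdiff : ∀ t ∈ Set.Ioo α β, DifferentiableAt ℝ lam t)
    (hroot : ∀ t ∈ Set.Ioo α β, (phi (aRotAll a t) n).eval (lam t) = 0)
    (hne : ∀ t ∈ Set.Ioo α β, lam t ≠ 0) :
    ∀ t ∈ Set.Ioo α β,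
      KkerPert a (aRotAll a t) (n - 1) (lam t) ((conj (lam t))⁻¹) * deriv lam t =
          Complex.I * lam t ∧
      (KkerPert a (aRotAll a t) (n - 1) (lam t) ((conj (lam t))⁻¹) ≠ 0 →
        deriv lam t =
          Complex.I * lam t / KkerPert a (aRotAll a t) (n - 1) (lam t) ((conj (lam t))⁻¹)) := by
  intro t ht
  obtain ⟨m, rfl⟩ : ∃ m, n = m + 1 := ⟨n - 1, by omega⟩
  set b := aRotAll a t
  have hnorm : ∀ k, ‖b k‖ = ‖a k‖ := norm_aRotAll a t
  have hD : ∀ k ≤ m + 1, normDefect b k ≠ 0 := fun k hk =>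
    normDefect_ne_zero b fun j h1 h2 => hnorm j ▸ ha j h1 (h2.trans hk)
  have himplicit : (phiDeriv b (fun k => I * b k) (m + 1)).1.eval (lam t) +
      (derivative (phi b (m + 1))).eval (lam t) * deriv lam t = 0 := by
    have hder := (hasDerivAt_eval_phi (hasDerivAt_aRotAll a t) (hdiff t ht).hasDerivAt (m + 1)).1
    refine hder.unique ((hasDerivAt_const t 0).congr_of_eventuallyEq ?_)
    filter_upwards [Ioo_mem_nhds ht.1 ht.2] with s hs using hroot s hs
  have hW := revc_mul_phiDeriv_rotation_of_root b (hroot t ht)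
  have hCD := normDefect_mul_Kker_of_root b (fun k hk => hD k (by omega)) (hne t ht) (hroot t ht)
  have hmain : Kker b m (lam t) (conj (lam t))⁻¹ * deriv lam t = I * lam t := by
    refine mul_left_cancel₀ (mul_ne_zero (ofReal_ne_zero.2 (hD _ le_rfl))
      (pow_ne_zero (m + 1) (hne t ht))) ?_
    linear_combination deriv lam t * hCD +
      lam t * (revc (phi b (m + 1))).eval (lam t) * himplicit - lam t * hW
  rw [Nat.add_sub_cancel, KkerPert_eq_Kker a hnorm]
  exact ⟨hmain, fun hK => eq_div_of_mul_eq hK (by rw [mul_comm]; exact hmain)⟩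
end
end
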